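/- The linear program: maximize (1/3)·⟨s, x⟩ over x ∈ ℝ⁵ subject to ⟨g, x⟩ ≤ 0, ∑ᵢ xᵢ = 1, x ≥ 0, where s = (0,1,2,2,3) and g = (0,−2,0,−1,3), has optimal value 3/4, attained at x = (0, 0, 0, 3/4, 1/4). -/
import Mathlib


/-- The vector s = (0,1,2,2,3). -/
def sVec : Fin 5 → ℝ := ![0, 1, 2, 2, 3]

/-- The vector g = (0,−2,0,−1,3). -/
def gVec : Fin 5 → ℝ := ![0, -2, 0, -1, 3]

/-- Feasibility for the LP: x ≥ 0, ∑ xᵢ = 1, ⟨g,x⟩ ≤ 0. -/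
def Feasible (x : Fin 5 → ℝ) : Prop :=
  (∀ i, 0 ≤ x i) ∧ (∑ i, x i = 1) ∧ (∑ i, gVec i * x i ≤ 0)

/-- The LP maximize (1/3)⟨s,x⟩ subject to ⟨g,x⟩ ≤ 0, ∑ xᵢ = 1, x ≥ 0 has optimal value 3/4,
attained at x = (0,0,0,3/4,1/4). -/
theorem lp_optimal_value :
    IsGreatest {y : ℝ | ∃ x : Fin 5 → ℝ, Feasible x ∧ y = (1 / 3) * ∑ i, sVec i * x i}
      (3 / 4) ∧
    Feasible ![0, 0, 0, 3 / 4, 1 / 4] ∧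
    (1 / 3) * ∑ i, sVec i * (![0, 0, 0, 3 / 4, 1 / 4] : Fin 5 → ℝ) i = 3 / 4 := by
  have hfeas : Feasible ![0, 0, 0, 3 / 4, 1 / 4] := by
    refine ⟨fun i => ?_, ?_, ?_⟩
    · fin_cases i <;> norm_num
    · simp [Fin.sum_univ_five]; norm_num
    · simp [Fin.sum_univ_five, gVec]; norm_num
  have hval : (1 / 3) * ∑ i, sVec i * (![0, 0, 0, 3 / 4, 1 / 4] : Fin 5 → ℝ) i = 3 / 4 := by
    simp [Fin.sum_univ_five, sVec]; norm_num
  refine ⟨⟨⟨_, hfeas, hval.symm⟩, ?_⟩, hfeas, hval⟩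
  rintro y ⟨x, ⟨hpos, hsum, hg⟩, rfl⟩
  have h0 := hpos 0; have h1 := hpos 1; have h2 := hpos 2
  have h3 := hpos 3; have h4 := hpos 4
  simp only [Fin.sum_univ_five, sVec, gVec, Matrix.cons_val_zero, Matrix.cons_val_one,
    Matrix.head_cons, Matrix.cons_val_two, Matrix.tail_cons, Matrix.cons_val_three,
    Matrix.cons_val_four] at hsum hg ⊢
  linarith
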